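/- Let T be a finite tree, v any vertex, and c a center vertex of T with d(v,c) = d(v, C_T). Then c has an eccentricity witness w (i.e., d(c,w) = ecc(c)) such that the unique path from v to w passes through c, equivalently d(v,w) = d(v,c) + d(c,w). -/

import Mathlib

/-! If `v ≠ c`, let `u` be the neighbour of `c` on the path towards `v`. A vertex on the far
side of the edge `uc` is reached from `v` through `c`, so if no eccentricity witness of `c` lay
there, every vertex would be within `ecc c` of `u` as well. Then `u` would be a center vertex
strictly closer to `v` than `c`. -/

open SimpleGraph

/-- The eccentricity of a vertex: the maximum distance to any vertex. -/
noncomputable def ecc {V : Type*} [Fintype V] (G : SimpleGraph V) (v : V) : ℕ :=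
  Finset.univ.sup (fun u => G.dist v u)

/-- The radius: the minimum eccentricity. -/
noncomputable def grad {V : Type*} [Fintype V] (G : SimpleGraph V) : ℕ :=
  sInf {n : ℕ | ∃ v : V, ecc G v = n}

/-- The center: the set of vertices of minimum eccentricity. -/
noncomputable def center {V : Type*} [Fintype V] (G : SimpleGraph V) : Set V :=
  {v : V | ecc G v = grad G}

namespace SimpleGraph

variable {V : Type*} {G : SimpleGraph V}

lemma Walk.dist_add_dist_of_mem_support {u v y : V} {p : G.Walk u v}
    (hp : p.length = G.dist u v) (hy : y ∈ p.support) :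
    G.dist u y + G.dist y v = G.dist u v := by
  classical
  rw [← length_eq_dist_of_subwalk hp (p.isSubwalk_takeUntil hy),
    ← length_eq_dist_of_subwalk hp (p.isSubwalk_dropUntil hy), ← Walk.length_append,
    p.take_spec hy, hp]

lemma Walk.dist_lt_dist_of_mem_support {v u c y : V} {p : G.Walk v u}
    (hp : p.length = G.dist v u) (hc : G.dist v u < G.dist v c) (hy : y ∈ p.support) :
    G.dist y u < G.dist y c := by
  classical
  have hsplit := p.dist_add_dist_of_mem_support hp hy
  have htri := (p.takeUntil y hy).reachable.dist_triangle_left c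
  omega

lemma Walk.IsPath.append_cons {u v w x : V} {p : G.Walk u v} {q : G.Walk w x}
    (hp : p.IsPath) (hq : q.IsPath) (hadj : G.Adj v w) (hpq : p.support.Disjoint q.support) :
    (p.append (cons hadj q)).IsPath := by
  rw [Walk.isPath_def, Walk.support_append, Walk.support_cons, List.tail_cons]
  exact List.nodup_append'.mpr ⟨hp.support_nodup, hq.support_nodup, hpq⟩

lemma IsAcyclic.length_eq_dist_of_isPath (hG : G.IsAcyclic) {u v : V} {p : G.Walk u v}
    (hp : p.IsPath) : p.length = G.dist u v := by
  obtain ⟨q, hq, hql⟩ := p.reachable.exists_path_of_dist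
  have hpq : (⟨p, hp⟩ : G.Path u v) = ⟨q, hq⟩ := (hG.subsingleton_path u v).elim _ _
  rw [← hql, Subtype.mk.inj hpq]

/-- In a forest, a path from the `u`-side of an edge `uc` to its `c`-side crosses that edge. -/
theorem IsAcyclic.dist_eq_add_of_adj (hG : G.IsAcyclic) {v u c x : V} (hadj : G.Adj u c)
    (hv : G.dist v u < G.dist v c) (hx : G.dist c x < G.dist u x) :
    G.dist v x = G.dist v u + 1 + G.dist c x := by
  have hvu : G.Reachable v u := (Reachable.of_dist_ne_zero (by omega)).trans hadj.symm.reachable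
  have hcx : G.Reachable c x := hadj.symm.reachable.trans (Reachable.of_dist_ne_zero (by omega))
  obtain ⟨p, hp, hpl⟩ := hvu.exists_path_of_dist
  obtain ⟨q, hq, hql⟩ := hcx.exists_path_of_dist
  have hqrl : q.reverse.length = G.dist x c := by rw [Walk.length_reverse, hql, dist_comm]
  have hx' : G.dist x c < G.dist x u := by rwa [dist_comm, dist_comm (u := x)]
  have hdisj : p.support.Disjoint q.support := fun y hyp hyq => by
    have hyu := p.dist_lt_dist_of_mem_support hpl hv hyp
    have hyc := q.reverse.dist_lt_dist_of_mem_support hqrl hx' (by simpa using hyq)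
    omega
  rw [← hG.length_eq_dist_of_isPath (hp.append_cons hq hadj hdisj), Walk.length_append,
    Walk.length_cons, hpl, hql, add_assoc, add_comm (G.dist c x)]

lemma Reachable.exists_adj_dist_add_one_eq {v c : V} (hr : G.Reachable v c) (hne : v ≠ c) :
    ∃ u, G.Adj u c ∧ G.dist v u + 1 = G.dist v c := by
  obtain ⟨p, hp⟩ := hr.exists_walk_length_eq_dist
  obtain ⟨u, hcu, q, hq⟩ := p.reverse.exists_eq_cons_of_ne hne.symm
  have hlen := congrArg Walk.length hq
  rw [Walk.length_reverse, hp, Walk.length_cons] at hlen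
  have hle : G.dist u v ≤ q.length := dist_le q
  have htri := hcu.symm.reachable.dist_triangle_right v
  rw [dist_eq_one_iff_adj.mpr hcu.symm, dist_comm (u := u)] at *
  exact ⟨u, hcu.symm, by omega⟩

end SimpleGraph

section Eccentricity

variable {V : Type*} [Fintype V] (G : SimpleGraph V)

lemma dist_le_ecc (u x : V) : G.dist u x ≤ ecc G u :=
  Finset.le_sup (Finset.mem_univ x)

lemma exists_dist_eq_ecc (u : V) : ∃ w, G.dist u w = ecc G u := by
  obtain ⟨w, -, hw⟩ := Finset.univ.exists_mem_eq_sup ⟨u, Finset.mem_univ u⟩ (G.dist u)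
  exact ⟨w, hw.symm⟩

variable {G}

lemma mem_center_of_ecc_le {c u : V} (hc : c ∈ _root_.center G) (h : ecc G u ≤ ecc G c) :
    u ∈ _root_.center G :=
  le_antisymm (h.trans_eq hc) (Nat.sInf_le ⟨u, rfl⟩)

lemma SimpleGraph.IsTree.ecc_le_ecc_of_adj (hG : G.IsTree) {u c : V} (hadj : G.Adj u c)
    (h : ∀ x, G.dist c x < G.dist u x → G.dist c x < ecc G c) : ecc G u ≤ ecc G c := by
  refine Finset.sup_le fun x _ => ?_
  have hcx := dist_le_ecc G c x
  have hstep := hG.dist_eq_dist_add_one_of_adj x hadj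
  rw [dist_comm (u := x), dist_comm (u := x)] at hstep
  rcases hstep with hfar | hnear
  · have := h x (by omega)
    omega
  · omega

end Eccentricity

/-- In a tree, if `c` is a center vertex closest to `v`, then `c` has an
eccentricity witness `w` such that the path from `v` to `w` passes through `c`. -/
theorem tree_center_ecc_witness {V : Type*} [Fintype V] (T : SimpleGraph V)
    (hT : T.IsTree) (v c : V) (hc : c ∈ _root_.center T)
    (hclosest : ∀ c' ∈ _root_.center T, T.dist v c ≤ T.dist v c') :
    ∃ w : V, T.dist c w = ecc T c ∧ T.dist v w = T.dist v c + T.dist c w := by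
  by_cases hvc : v = c
  · obtain ⟨w, hw⟩ := exists_dist_eq_ecc T c
    exact ⟨w, hw, by rw [hvc, SimpleGraph.dist_self, zero_add]⟩
  obtain ⟨u, hadj, hvu⟩ := (hT.connected v c).exists_adj_dist_add_one_eq hvc
  by_contra! hno
  have hu : u ∈ _root_.center T := mem_center_of_ecc_le hc <| hT.ecc_le_ecc_of_adj hadj
    fun x hx => (dist_le_ecc T c x).lt_of_ne fun hwit =>
      hno x hwit (by rw [hT.isAcyclic.dist_eq_add_of_adj hadj (by omega) hx, hvu])
  have := hclosest u hu
  omega
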